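/- arXiv:2510.00951 — 3 statements merged into one kernel-verified Lean document; each statement's English description precedes it below -/
import Mathlib

section
/- Let P be a finite, graded, bounded poset of rank n ≥ 1. Then exΨ_P(y,a,b) = (a-b)^n + Poin_P(y)·b(a-b)^{n-1} + ∑_{0̂ < w < 1̂} ((a-b)^{rk(w)} + Poin_{[0̂,w]}(y)·b(a-b)^{rk(w)-1})·b·exΨ̃_{[w,1̂]}(y,a,b). -/
open Polynomial

noncomputable section

/-- The coefficient ring `ℤ[y]`. -/
abbrev NCR : Type := Polynomial ℤ

/-- The ring `ℤ[y]⟨a,b⟩` of noncommutative polynomials in the letters `a` (encoded `false`)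
and `b` (encoded `true`) with coefficients in `ℤ[y]`. -/
abbrev NCPoly : Type := MonoidAlgebra NCR (FreeMonoid Bool)

/-- The variable `a`. -/
def Aa : NCPoly := MonoidAlgebra.of NCR (FreeMonoid Bool) (FreeMonoid.of false)

/-- The variable `b`. -/
def Bb : NCPoly := MonoidAlgebra.of NCR (FreeMonoid Bool) (FreeMonoid.of true)

/-- The `ω`-transformation on a single `ab`-monomial (word in `a`,`b`): every occurrence of
the factor `ab` is replaced by `(1+y)ab + (y+y²)ba`, and then all remaining occurrences of `a`
are replaced by `a+yb` and of `b` by `b+ya`. -/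
def omegaWord : List Bool → NCPoly
  | [] => 1
  | false :: true :: rest =>
      (((1 + X : NCR)) • (Aa * Bb) + ((X + X ^ 2 : NCR)) • (Bb * Aa)) * omegaWord rest
  | false :: rest => (Aa + (X : NCR) • Bb) * omegaWord rest
  | true :: rest => (Bb + (X : NCR) • Aa) * omegaWord rest

/-- The `ω`-transformation on `ℤ[y]⟨a,b⟩`, extended linearly from `ab`-monomials. -/
def omega (f : NCPoly) : NCPoly :=
  (f.coeff : FreeMonoid Bool →₀ NCR).sum fun w c => c • omegaWord (FreeMonoid.toList w)

/-- The `ι`-transformation on `ℤ[y]⟨a,b⟩`: it removes the initial letter from every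
`ab`-monomial (and kills the empty monomial). -/
def iota (f : NCPoly) : NCPoly :=
  (f.coeff : FreeMonoid Bool →₀ NCR).sum fun w c =>
    match FreeMonoid.toList w with
    | [] => 0
    | _ :: rest => c • MonoidAlgebra.of NCR (FreeMonoid Bool) (FreeMonoid.ofList rest)

/-- `wt_S(a,b) = w_0 ⋯ w_{n-1}` where `w_k = b` if `k ∈ S` and `w_k = a - b` otherwise. -/
def wtS (n : ℕ) (S : Finset ℕ) : NCPoly :=
  ((List.range n).map fun j => if j ∈ S then Bb else Aa - Bb).prod

/-- Evaluation `f(y,a,b) ↦ f(-x,1,x)` used to define (augmented) Chow polynomials. -/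
def evalChow (f : NCPoly) : Polynomial ℤ :=
  (f.coeff : FreeMonoid Bool →₀ NCR).sum fun w c =>
    c.comp (-X) * X ^ ((FreeMonoid.toList w).count true)

/-- The `ab`-monomial `m_T = m_0 ⋯ m_{n-1}` with `m_i = b` if `i ∈ T` and `m_i = a` else. -/
def mT (n : ℕ) (T : Finset ℕ) : FreeMonoid Bool :=
  FreeMonoid.ofList ((List.range n).map fun i => decide (i ∈ T))

variable {P : Type*} [Fintype P] [PartialOrder P]

open Classical in
/-- The Möbius function of a finite poset:
`μ(w,w) = 1` and `μ(u,w) = -∑_{u ≤ v < w} μ(u,v)` for `u ≠ w`. -/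
def mobius (u : P) : P → ℤ
  | w =>
    if u = w then 1
    else - ∑ v ∈ (Finset.univ.filter fun v : P => u ≤ v ∧ v < w).attach, mobius u v.1
  termination_by w => (Finset.univ.filter fun v : P => u ≤ v ∧ v ≤ w).card
  decreasing_by
    have hv := v.2
    simp only [Finset.mem_filter, Finset.mem_univ, true_and] at hv
    apply Finset.card_lt_card
    constructor
    · intro x hx
      simp only [Finset.mem_filter, Finset.mem_univ, true_and] at hx ⊢
      exact ⟨hx.1, hx.2.trans hv.2.le⟩
    · intro hsub
      have hw : w ∈ Finset.univ.filter fun v : P => u ≤ v ∧ v ≤ w := by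
        simp only [Finset.mem_filter, Finset.mem_univ, true_and]
        exact ⟨hv.1.trans hv.2.le, le_refl w⟩
      have := hsub hw
      simp only [Finset.mem_filter, Finset.mem_univ, true_and] at this
      exact absurd (lt_of_le_of_lt this.2 hv.2) (lt_irrefl w)

open Classical in
/-- The Poincaré polynomial of the interval `[u,w]`, with respect to the rank function `rk`:
`Poin_{[u,w]}(y) = ∑_{u ≤ v ≤ w} μ(u,v)·(-y)^{rk(v) - rk(u)}`. -/
def poin (rk : P → ℕ) (u w : P) : Polynomial ℤ :=
  ∑ v ∈ Finset.univ.filter fun v : P => u ≤ v ∧ v ≤ w,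
    mobius u v • (-X : Polynomial ℤ) ^ (rk v - rk u)

variable [BoundedOrder P]

open Classical in
/-- The extended `ab`-index of the interval `[u₀, ⊤]` of `P` (with ranks taken relative
to `u₀`): the sum over all chains `u₀ ≤ C_1 < ⋯ < C_k < C_{k+1} = ⊤` of
`Poin_{P,C}(y)·wt_C(a,b)`. -/
def exPsiFrom (rk : P → ℕ) (u₀ : P) : NCPoly :=
  ∑ k ∈ Finset.range (Fintype.card P),
    ∑ c ∈ Finset.univ.filter fun c : Fin (k + 1) → P =>
        StrictMono c ∧ c (Fin.last k) = (⊤ : P) ∧ u₀ ≤ c 0,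
      (∏ i : Fin k, poin rk (c i.castSucc) (c i.succ)) •
        wtS (rk (⊤ : P) - rk u₀) (Finset.univ.image fun i : Fin k => rk (c i.castSucc) - rk u₀)

open Classical in
/-- The `ab`-index of the interval `[u₀, ⊤]` of `P`: the sum over all chains
`u₀ ≤ C_1 < ⋯ < C_k < C_{k+1} = ⊤` of `wt_C(a,b)`. -/
def psiFrom (rk : P → ℕ) (u₀ : P) : NCPoly :=
  ∑ k ∈ Finset.range (Fintype.card P),
    ∑ c ∈ Finset.univ.filter fun c : Fin (k + 1) → P =>
        StrictMono c ∧ c (Fin.last k) = (⊤ : P) ∧ u₀ ≤ c 0,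
      wtS (rk (⊤ : P) - rk u₀) (Finset.univ.image fun i : Fin k => rk (c i.castSucc) - rk u₀)

/-- `exΨ̃ = ι(exΨ)` for the interval `[u₀, ⊤]`. -/
def exPsiTildeFrom (rk : P → ℕ) (u₀ : P) : NCPoly := iota (exPsiFrom rk u₀)

/-- `Ψ̃ = ι(Ψ)` for the interval `[u₀, ⊤]`. -/
def psiTildeFrom (rk : P → ℕ) (u₀ : P) : NCPoly := iota (psiFrom rk u₀)

open Classical in
/-- The flag `f`-vector `α(S)`: the number of maximal chains of the rank-selected subposet,
i.e. of chains `C_1 < ⋯ < C_k < C_{k+1} = ⊤` with `{rk(C_1), …, rk(C_k)} = S`. -/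
def flagAlpha (rk : P → ℕ) (S : Finset ℕ) : ℕ :=
  ∑ k ∈ Finset.range (Fintype.card P),
    (Finset.univ.filter fun c : Fin (k + 1) → P =>
      StrictMono c ∧ c (Fin.last k) = (⊤ : P) ∧
        (Finset.univ.image fun i : Fin k => rk (c i.castSucc)) = S).card

/-- The flag `h`-vector `β(T) = ∑_{S ⊆ T} (-1)^{|T∖S|} α(S)`. -/
def flagBeta (rk : P → ℕ) (T : Finset ℕ) : ℤ :=
  ∑ S ∈ T.powerset, (-1 : ℤ) ^ (T \ S).card * (flagAlpha rk S : ℤ)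

/-- An `R`-labeling of the graded poset `P`: every nontrivial interval `[u,w]` has a unique
maximal (i.e. saturated) chain with weakly increasing labels. -/
def IsRLabeling (rk : P → ℕ) (lab : P → P → ℤ) : Prop :=
  ∀ u w : P, u < w →
    ∃! c : Fin (rk w - rk u + 1) → P,
      c 0 = u ∧ c (Fin.last (rk w - rk u)) = w ∧
        (∀ i : Fin (rk w - rk u), c i.castSucc ⋖ c i.succ) ∧
        ∀ i j : Fin (rk w - rk u), i ≤ j →
          lab (c i.castSucc) (c i.succ) ≤ lab (c j.castSucc) (c j.succ)

/-- The label sequence `(λ_0, …, λ_n)` of a maximal chain `c` with sign-set `E`: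
`λ_0 = 0` and `λ_i = ±λ(c_{i-1}, c_i)`, negative exactly when `i ∈ E`. -/
def lamSeq {n : ℕ} (lab : P → P → ℤ) (c : Fin (n + 1) → P) (E : Finset ℕ) :
    Fin (n + 1) → ℤ :=
  fun j =>
    if j = 0 then 0
    else (if (j : ℕ) ∈ E then -1 else 1) * lab (c ⟨j.1 - 1, by omega⟩) (c j)

/-- The `ab`-monomial `m(M,E) = m_0 ⋯ m_{n-1}` with `m_i = b` if `λ_i > λ_{i+1}`
and `m_i = a` if `λ_i ≤ λ_{i+1}`. -/
def rlabWord {n : ℕ} (lab : P → P → ℤ) (c : Fin (n + 1) → P) (E : Finset ℕ) :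
    FreeMonoid Bool :=
  FreeMonoid.ofList
    (List.ofFn fun i : Fin n => decide (lamSeq lab c E i.succ < lamSeq lab c E i.castSucc))

end

/-!
Sort the chains `C` of `P` ending in `1̂` by their least element `w ≠ 0̂`. Apart from `{1̂}` and
`{0̂, 1̂}`, which give the first two terms, every chain is `w < ⋯ < 1̂` or `0̂ < w < ⋯ < 1̂` with
`0̂ < w < 1̂`. All ranks after `w` exceed `rk w`, so the weight of such a chain factors as
`(a-b)^{rk w}·b·t` resp. `b(a-b)^{rk w - 1}·b·t` (the extra `0̂` contributing the factor
`Poin_{[0̂,w]}`), where `t` only depends on the chain from `w` on. Summing `t` over the chains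
starting at `w` gives `exΨ̃_{[w,1̂]}`: in `exΨ_{[w,1̂]}` the chains avoiding `w` start with the
letter `a-b`, which `ι` kills, and those through `w` start with `b`, which `ι` removes.
-/

open Finset

noncomputable section

def iotaLinearMap : NCPoly →ₗ[NCR] NCPoly where
  toFun := iota
  map_add' f g := by
    simp only [iota, MonoidAlgebra.coeff_add]
    exact Finsupp.sum_add_index' (fun w => by split <;> simp)
      (fun w c d => by split <;> simp [add_smul])
  map_smul' c f := by
    simp only [iota, MonoidAlgebra.coeff_smul, RingHom.id_apply, Finsupp.smul_sum]
    rw [Finsupp.sum_smul_index' (fun w => by split <;> simp)]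
    exact Finsupp.sum_congr fun w _ => by split <;> simp [mul_smul]

lemma iota_eq_iotaLinearMap (f : NCPoly) : iota f = iotaLinearMap f := rfl

lemma iota_of_mul (x : Bool) (f : NCPoly) :
    iota (MonoidAlgebra.of NCR (FreeMonoid Bool) (FreeMonoid.of x) * f) = f := by
  rw [iota_eq_iotaLinearMap]
  induction f using MonoidAlgebra.induction_linear with
  | zero => simp
  | add g h hg hh => rw [mul_add, map_add, hg, hh]
  | single w c =>
    rw [MonoidAlgebra.of_apply, MonoidAlgebra.single_mul_single, one_mul]
    simp [iotaLinearMap, iota]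

def wtFrom (o m : ℕ) (S : Finset ℕ) : NCPoly :=
  ((List.range m).map fun j => if o + j ∈ S then Bb else Aa - Bb).prod

lemma wtS_eq_wtFrom (m : ℕ) (S : Finset ℕ) : wtS m S = wtFrom 0 m S := by
  simp [wtS, wtFrom]

@[simp] lemma wtFrom_zero (o : ℕ) (S : Finset ℕ) : wtFrom o 0 S = 1 := rfl

lemma wtFrom_one (o : ℕ) (S : Finset ℕ) :
    wtFrom o 1 S = if o ∈ S then Bb else Aa - Bb := by
  simp [wtFrom]

lemma wtFrom_add (o m k : ℕ) (S : Finset ℕ) :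
    wtFrom o (m + k) S = wtFrom o m S * wtFrom (o + m) k S := by
  simp only [wtFrom, List.range_add, List.map_append, List.prod_append, List.map_map,
    Function.comp_def, add_assoc]

lemma wtFrom_congr {o m : ℕ} {S T : Finset ℕ} (h : ∀ j, o ≤ j → j < o + m → (j ∈ S ↔ j ∈ T)) :
    wtFrom o m S = wtFrom o m T := by
  unfold wtFrom
  congr 1
  refine List.map_congr_left fun j hj => ?_
  exact if_congr (h (o + j) (by omega) (by simpa using hj)) rfl rfl

lemma wtFrom_eq_pow {o m : ℕ} {S : Finset ℕ} (h : ∀ j, o ≤ j → j < o + m → j ∉ S) :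
    wtFrom o m S = (Aa - Bb) ^ m := by
  rw [wtFrom_congr (T := ∅) fun j h₁ h₂ => by simpa using h j h₁ h₂]
  simp [wtFrom]

@[simp] lemma wtFrom_empty (o m : ℕ) : wtFrom o m ∅ = (Aa - Bb) ^ m :=
  wtFrom_eq_pow fun _ _ _ => notMem_empty _

lemma wtS_image_sub {r m : ℕ} {T : Finset ℕ} (hT : ∀ t ∈ T, r ≤ t) :
    wtS m (T.image (· - r)) = wtFrom r m T := by
  rw [wtS_eq_wtFrom]
  unfold wtFrom
  congr 1
  refine List.map_congr_left fun j _ => ?_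
  congr 1
  simp only [zero_add, mem_image, eq_iff_iff]
  exact ⟨fun ⟨t, ht, htj⟩ => by rwa [← htj, Nat.add_sub_cancel' (hT t ht)],
    fun h => ⟨r + j, h, by omega⟩⟩

lemma iota_wtFrom_succ (o m : ℕ) (S : Finset ℕ) :
    iota (wtFrom o (1 + m) S) = if o ∈ S then wtFrom (o + 1) m S else 0 := by
  rw [wtFrom_add, wtFrom_one]
  split
  · exact iota_of_mul true _
  · rw [iota_eq_iotaLinearMap, sub_mul, map_sub, ← iota_eq_iotaLinearMap,
      ← iota_eq_iotaLinearMap, Aa, Bb, iota_of_mul, iota_of_mul, sub_self]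

lemma wtFrom_split {r N : ℕ} {S : Finset ℕ} (hr : r < N) (hS : r ∈ S) :
    wtFrom 0 N S = wtFrom 0 r S * Bb * wtFrom (r + 1) (N - r - 1) S := by
  obtain ⟨m, rfl⟩ : ∃ m, N = r + 1 + m := ⟨N - r - 1, by omega⟩
  rw [wtFrom_add, wtFrom_add, zero_add, zero_add, wtFrom_one, if_pos hS,
    show r + 1 + m - r - 1 = m by omega]

lemma wtFrom_singleton_zero {N : ℕ} (hN : 0 < N) : wtFrom 0 N {0} = Bb * (Aa - Bb) ^ (N - 1) := by
  rw [wtFrom_split hN (mem_singleton_self 0), wtFrom_zero, one_mul, Nat.sub_zero,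
    wtFrom_eq_pow fun j hj _ => by simpa using Nat.one_le_iff_ne_zero.1 hj]

lemma wtFrom_insert_split {r N : ℕ} {T : Finset ℕ} (hr : r < N) (hT : ∀ t ∈ T, r < t) :
    wtFrom 0 N (insert r T) = (Aa - Bb) ^ r * Bb * wtFrom (r + 1) (N - r - 1) (insert r T) := by
  rw [wtFrom_split hr (mem_insert_self r T), wtFrom_eq_pow]
  intro j _ hj
  simp only [mem_insert, not_or]
  exact ⟨by omega, fun h => by have := hT j h; omega⟩

lemma wtFrom_insert_zero_insert_split {r N : ℕ} {T : Finset ℕ} (h0 : 0 < r) (hr : r < N)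
    (hT : ∀ t ∈ T, r < t) :
    wtFrom 0 N (insert 0 (insert r T)) =
      Bb * (Aa - Bb) ^ (r - 1) * Bb * wtFrom (r + 1) (N - r - 1) (insert r T) := by
  rw [wtFrom_split hr (by simp), wtFrom_split h0 (mem_insert_self _ _), wtFrom_zero, one_mul,
    Nat.sub_zero, wtFrom_eq_pow, wtFrom_congr]
  · intro j hj _
    simp only [mem_insert, or_iff_right_iff_imp]
    omega
  · intro j hj₁ hj₂
    simp only [mem_insert, not_or]
    exact ⟨by omega, by omega, fun h => by have := hT j h; omega⟩

variable {P : Type*} [Fintype P] [PartialOrder P]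

lemma strictMono_of_forall_covBy_eq_add_one {rk : P → ℕ}
    (hrk : ∀ u v : P, u ⋖ v → rk v = rk u + 1) : StrictMono rk := by
  classical
  let := Fintype.toLocallyFiniteOrder (α := P)
  exact (strictMono_iff_forall_covBy rk).2 fun u v huv => by rw [hrk u v huv]; omega

def chainPoin (rk : P → ℕ) {k : ℕ} (c : Fin (k + 1) → P) : NCR :=
  ∏ i : Fin k, poin rk (c i.castSucc) (c i.succ)

def chainRanks (rk : P → ℕ) {k : ℕ} (c : Fin (k + 1) → P) : Finset ℕ :=
  univ.image fun i : Fin k => rk (c i.castSucc)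

@[simp] lemma chainPoin_of_fin_one (rk : P → ℕ) (c : Fin 1 → P) : chainPoin rk c = 1 := by
  simp [chainPoin]

omit [Fintype P] [PartialOrder P] in
@[simp] lemma chainRanks_of_fin_one (rk : P → ℕ) (c : Fin 1 → P) : chainRanks rk c = ∅ := by
  simp [chainRanks]

lemma chainPoin_cons (rk : P → ℕ) {k : ℕ} (w : P) (d : Fin (k + 1) → P) :
    chainPoin rk (Fin.cons w d : Fin (k + 2) → P) = poin rk w (d 0) * chainPoin rk d := by
  simp [chainPoin, Fin.prod_univ_succ]

omit [Fintype P] [PartialOrder P] in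
lemma chainRanks_cons (rk : P → ℕ) {k : ℕ} (w : P) (d : Fin (k + 1) → P) :
    chainRanks rk (Fin.cons w d : Fin (k + 2) → P) = insert (rk w) (chainRanks rk d) := by
  ext t
  simp only [chainRanks, mem_image, mem_univ, true_and, mem_insert, Fin.exists_fin_succ,
    Fin.castSucc_zero, Fin.cons_zero, ← Fin.succ_castSucc, Fin.cons_succ, eq_comm]

omit [Fintype P] in
lemma le_of_mem_chainRanks {rk : P → ℕ} (hrk : Monotone rk) {k : ℕ} {c : Fin (k + 1) → P}
    (hc : Monotone c) {t : ℕ} (ht : t ∈ chainRanks rk c) : rk (c 0) ≤ t := by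
  obtain ⟨i, -, rfl⟩ := mem_image.1 ht
  exact hrk (hc (Fin.zero_le _))

variable [BoundedOrder P]

open Classical in
def chainsWith (Q : P → Prop) (k : ℕ) : Finset (Fin (k + 1) → P) :=
  univ.filter fun c => StrictMono c ∧ c (Fin.last k) = ⊤ ∧ Q (c 0)

def chainSum {M : Type*} [AddCommMonoid M] (Q : P → Prop)
    (f : (k : ℕ) → (Fin (k + 1) → P) → M) : M :=
  ∑ k ∈ range (Fintype.card P), ∑ c ∈ chainsWith Q k, f k c

@[simp] lemma mem_chainsWith {Q : P → Prop} {k : ℕ} {c : Fin (k + 1) → P} :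
    c ∈ chainsWith Q k ↔ StrictMono c ∧ c (Fin.last k) = ⊤ ∧ Q (c 0) := by
  simp [chainsWith]

lemma chainsWith_zero {Q : P → Prop} (hQ : Q ⊤) : chainsWith Q 0 = {fun _ => ⊤} := by
  ext c
  simp only [mem_chainsWith, mem_singleton, Fin.last_zero]
  refine ⟨fun h => funext fun i => by rw [Fin.fin_one_eq_zero i, h.2.1], ?_⟩
  rintro rfl
  exact ⟨show StrictMono (α := Fin 1) _ from Subsingleton.strictMono _, rfl, hQ⟩

lemma chainsWith_gt_eq_empty {w : P} {k : ℕ} (hk : Fintype.card P ≤ k + 1) :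
    chainsWith (w < ·) k = ∅ := by
  refine eq_empty_of_forall_notMem fun d hd => ?_
  rw [mem_chainsWith] at hd
  have hinj : Function.Injective (Fin.cons w d : Fin (k + 2) → P) :=
    (strictMono_vecCons.2 ⟨hd.2.2, hd.1⟩).injective
  simpa using Fintype.card_le_of_injective _ hinj |>.trans hk

open Classical in
lemma sum_chainsWith_succ {M : Type*} [AddCommMonoid M] (Q : P → Prop) (k : ℕ)
    (f : (Fin (k + 2) → P) → M) :
    ∑ c ∈ chainsWith Q (k + 1), f c =
      ∑ w ∈ univ.filter (fun w => Q w ∧ w < ⊤), ∑ d ∈ chainsWith (w < ·) k, f (Fin.cons w d) := by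
  have hmem : ∀ w d, (Fin.cons w d : Fin (k + 2) → P) ∈ chainsWith Q (k + 1) ↔
      (Q w ∧ w < ⊤) ∧ d ∈ chainsWith (w < ·) k := by
    intro w d
    have hsm : StrictMono (Fin.cons w d : Fin (k + 2) → P) ↔ w < d 0 ∧ StrictMono d :=
      strictMono_vecCons
    simp only [mem_chainsWith, hsm, ← Fin.succ_last, Fin.cons_succ, Fin.cons_zero]
    constructor
    · rintro ⟨⟨hw, hd⟩, hlast, hQ⟩
      exact ⟨⟨hQ, hw.trans_le le_top⟩, hd, hlast, hw⟩
    · rintro ⟨⟨hQ, -⟩, hd, hlast, hw⟩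
      exact ⟨⟨hw, hd⟩, hlast, hQ⟩
  rw [sum_sigma']
  refine sum_bij' (fun c _ => ⟨c 0, Fin.tail c⟩) (fun x _ => Fin.cons x.1 x.2) ?_ ?_ ?_ ?_ ?_
  · intro c hc
    rw [← Fin.cons_self_tail c, hmem] at hc
    simpa using hc
  · rintro ⟨w, d⟩ h
    exact (hmem w d).2 (by simpa using h)
  · intro c _
    exact Fin.cons_self_tail c
  · rintro ⟨w, d⟩ _
    simp
  · intro c _
    rw [Fin.cons_self_tail]

open Classical in
lemma chainSum_eq_add_sum {M : Type*} [AddCommMonoid M] {Q : P → Prop} (hQ : Q ⊤)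
    (f : (k : ℕ) → (Fin (k + 1) → P) → M) :
    chainSum Q f = f 0 (fun _ => ⊤) +
      ∑ w ∈ univ.filter (fun w => Q w ∧ w < ⊤),
        chainSum (w < ·) fun k d => f (k + 1) (Fin.cons w d) := by
  obtain ⟨N, hN⟩ : ∃ N, Fintype.card P = N + 1 :=
    Nat.exists_eq_succ_of_ne_zero Fintype.card_ne_zero
  rw [chainSum, hN, sum_range_succ', chainsWith_zero hQ, sum_singleton, add_comm]
  simp only [sum_chainsWith_succ]
  rw [sum_comm]
  congr 1
  refine sum_congr rfl fun w _ => ?_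
  rw [chainSum, hN, sum_range_succ, chainsWith_gt_eq_empty hN.le, sum_empty, add_zero]

lemma exPsiFrom_eq_chainSum {rk : P → ℕ} (hrk : Monotone rk) (u : P) :
    exPsiFrom rk u = chainSum (u ≤ ·) fun _ c =>
      chainPoin rk c • wtFrom (rk u) (rk ⊤ - rk u) (chainRanks rk c) := by
  refine sum_congr rfl fun k _ => sum_congr rfl fun c hc => ?_
  obtain ⟨hc, -, hu⟩ := mem_chainsWith.1 hc
  dsimp only
  rw [← wtS_image_sub fun t ht => (hrk hu).trans (le_of_mem_chainRanks hrk hc.monotone ht),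
    chainRanks, image_image]
  rfl

lemma rk_lt_of_mem_chainRanks {rk : P → ℕ} (hrk : StrictMono rk) {w : P} {k : ℕ}
    {d : Fin (k + 1) → P} (hd : d ∈ chainsWith (w < ·) k) {t : ℕ} (ht : t ∈ chainRanks rk d) :
    rk w < t := by
  obtain ⟨hd, -, hw⟩ := mem_chainsWith.1 hd
  exact (hrk hw).trans_le (le_of_mem_chainRanks hrk.monotone hd.monotone ht)

open Classical in
lemma sum_le_lt_top_eq_add {M : Type*} [AddCommMonoid M] {u : P} (hu : u < ⊤) (F : P → M) :
    ∑ v ∈ univ.filter (fun v => u ≤ v ∧ v < ⊤), F v =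
      F u + ∑ v ∈ univ.filter (fun v => u < v ∧ v < ⊤), F v := by
  rw [← sum_insert (by simp)]
  congr 1
  ext v
  simp only [mem_filter, mem_univ, true_and, mem_insert, le_iff_eq_or_lt]
  constructor
  · rintro ⟨rfl | h, h'⟩
    exacts [Or.inl rfl, Or.inr ⟨h, h'⟩]
  · rintro (rfl | ⟨h, h'⟩)
    exacts [⟨Or.inl rfl, hu⟩, ⟨Or.inr h, h'⟩]

open Classical in
lemma chainSum_ge_eq {M : Type*} [AddCommMonoid M] {u : P} (hu : u < ⊤)
    (f : (k : ℕ) → (Fin (k + 1) → P) → M) :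
    chainSum (u ≤ ·) f = f 0 (fun _ => ⊤) + f 1 (Fin.cons u fun _ => ⊤) +
      ∑ w ∈ univ.filter (fun w => u < w ∧ w < ⊤),
        ((chainSum (w < ·) fun k d => f (k + 1) (Fin.cons w d)) +
          chainSum (w < ·) fun k d => f (k + 2) (Fin.cons u (Fin.cons w d))) := by
  rw [chainSum_eq_add_sum (Q := (u ≤ ·)) le_top, sum_le_lt_top_eq_add hu,
    chainSum_eq_add_sum (Q := (u < ·)) hu,
    sum_add_distrib]
  abel

/-- The part after position `rk w` of the weights of the chains starting at `w`, summed with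
their Poincaré factors. -/
def tailSum (rk : P → ℕ) (w : P) : NCPoly :=
  chainSum (w < ·) fun k d =>
    chainPoin rk (Fin.cons w d : Fin (k + 2) → P) •
      wtFrom (rk w + 1) (rk ⊤ - rk w - 1) (chainRanks rk (Fin.cons w d : Fin (k + 2) → P))

lemma chainSum_cons_eq_mul_tailSum {rk : P → ℕ} (hrk : StrictMono rk) {w : P} (hw : w < ⊤) :
    (chainSum (w < ·) fun k d =>
      chainPoin rk (Fin.cons w d : Fin (k + 2) → P) •
        wtFrom 0 (rk ⊤) (chainRanks rk (Fin.cons w d : Fin (k + 2) → P))) =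
      (Aa - Bb) ^ rk w * Bb * tailSum rk w := by
  simp only [tailSum, chainSum, mul_sum, mul_smul_comm]
  refine sum_congr rfl fun k _ => sum_congr rfl fun d hd => ?_
  rw [chainRanks_cons, wtFrom_insert_split (hrk hw) fun t => rk_lt_of_mem_chainRanks hrk hd]

lemma chainSum_cons_bot_cons_eq_mul_tailSum {rk : P → ℕ} (hrk : StrictMono rk)
    (hbot : rk ⊥ = 0) {w : P} (hw₀ : ⊥ < w) (hw : w < ⊤) :
    (chainSum (w < ·) fun k d =>
      chainPoin rk (Fin.cons ⊥ (Fin.cons w d) : Fin (k + 3) → P) •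
        wtFrom 0 (rk ⊤) (chainRanks rk (Fin.cons ⊥ (Fin.cons w d) : Fin (k + 3) → P))) =
      poin rk ⊥ w • (Bb * (Aa - Bb) ^ (rk w - 1)) * Bb * tailSum rk w := by
  simp only [tailSum, chainSum, mul_sum, smul_mul_assoc, mul_smul_comm, smul_smul]
  refine sum_congr rfl fun k _ => sum_congr rfl fun d hd => ?_
  have h0 : 0 < rk w := hbot ▸ hrk hw₀
  rw [chainPoin_cons _ ⊥, Fin.cons_zero, chainRanks_cons _ ⊥, hbot, chainRanks_cons,
    wtFrom_insert_zero_insert_split h0 (hrk hw) fun t => rk_lt_of_mem_chainRanks hrk hd,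
    mul_comm]

open Classical in
lemma exPsiTildeFrom_eq_tailSum {rk : P → ℕ} (hrk : StrictMono rk) {w : P} (hw : w < ⊤) :
    exPsiTildeFrom rk w = tailSum rk w := by
  obtain ⟨m, hm⟩ : ∃ m, rk ⊤ - rk w = 1 + m := ⟨rk ⊤ - rk w - 1, by have := hrk hw; omega⟩
  have hterm : ∀ {k : ℕ} (c : Fin (k + 1) → P),
      iotaLinearMap (chainPoin rk c • wtFrom (rk w) (rk ⊤ - rk w) (chainRanks rk c)) =
        if rk w ∈ chainRanks rk c then chainPoin rk c • wtFrom (rk w + 1) m (chainRanks rk c)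
        else 0 := by
    intro k c
    rw [map_smul, ← iota_eq_iotaLinearMap, hm, iota_wtFrom_succ]
    split_ifs <;> simp
  have hvanish : ∀ v, w < v → ∀ k, ∀ d ∈ chainsWith (v < ·) k,
      rk w ∉ chainRanks rk (Fin.cons v d : Fin (k + 2) → P) := by
    intro v hv k d hd
    rw [chainRanks_cons, mem_insert, not_or]
    exact ⟨(hrk hv).ne, fun h => (rk_lt_of_mem_chainRanks hrk hd h).not_gt (hrk hv)⟩
  rw [exPsiTildeFrom, exPsiFrom_eq_chainSum hrk.monotone,
    chainSum_eq_add_sum (Q := (w ≤ ·)) le_top, sum_le_lt_top_eq_add hw, iota_eq_iotaLinearMap]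
  simp only [chainSum, map_add, map_sum, hterm]
  rw [if_neg (by simp), zero_add, sum_eq_zero fun v hv => sum_eq_zero fun k _ =>
    sum_eq_zero fun d hd => if_neg (hvanish v (mem_filter.1 hv).2.1 k d hd), add_zero, tailSum,
    chainSum, show rk ⊤ - rk w - 1 = m by omega]
  refine sum_congr rfl fun k _ => sum_congr rfl fun d _ => if_pos ?_
  simp [chainRanks_cons]

end

open Classical in
/-- Recursion for the extended `ab`-index of a finite, graded, bounded poset
of rank `n ≥ 1`. -/
theorem exPsi_recursion
    {P : Type*} [Fintype P] [PartialOrder P] [BoundedOrder P]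
    (rk : P → ℕ) (n : ℕ) (hn : 1 ≤ n)
    (hrk_bot : rk (⊥ : P) = 0) (hrk_top : rk (⊤ : P) = n)
    (hrk_cov : ∀ u v : P, u ⋖ v → rk v = rk u + 1) :
    exPsiFrom rk (⊥ : P) =
      (Aa - Bb) ^ n + poin rk (⊥ : P) (⊤ : P) • (Bb * (Aa - Bb) ^ (n - 1)) +
        ∑ w ∈ Finset.univ.filter fun w : P => ⊥ < w ∧ w < ⊤,
          ((Aa - Bb) ^ rk w + poin rk (⊥ : P) w • (Bb * (Aa - Bb) ^ (rk w - 1))) * Bb *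
            exPsiTildeFrom rk w := by
  subst hrk_top
  have hrk := strictMono_of_forall_covBy_eq_add_one hrk_cov
  have hbot_top : (⊥ : P) < ⊤ := bot_le.lt_of_ne fun h => by rw [h] at hrk_bot; omega
  rw [exPsiFrom_eq_chainSum hrk.monotone, hrk_bot, Nat.sub_zero, chainSum_ge_eq hbot_top]
  congr 1
  · simp only [chainPoin_of_fin_one, chainRanks_of_fin_one, chainPoin_cons, chainRanks_cons,
      hrk_bot, one_smul, mul_one, wtFrom_empty, insert_empty, wtFrom_singleton_zero hn]
  · refine sum_congr rfl fun w hw => ?_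
    obtain ⟨hw₀, hw⟩ := (mem_filter.1 hw).2
    rw [chainSum_cons_eq_mul_tailSum hrk hw,
      chainSum_cons_bot_cons_eq_mul_tailSum hrk hrk_bot hw₀ hw, exPsiTildeFrom_eq_tailSum hrk hw,
      add_mul, add_mul, smul_mul_assoc, smul_mul_assoc]
end

section
/- For every k ≥ 0, (1+y)·ω((a-b)^k) = (1-(-y)^{k+1})·(a-b)^k in ℤ[y]⟨a,b⟩. -/
open Polynomial

/-! Write `d = a - b`. The map `ω` acts letter by letter except on a factor `ab`, and
`(a + yb)(b + ya) - ((1+y)ab + (y+y²)ba) = y d²`; splitting `d² f = a (d f) - b (d f)` and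
`a (d f) = a a f - a b f` this gives, for every `f`,
`ω(d² f) = (1-y) d ω(d f) + y d² ω(f)`.
So `ω(dᵏ) = c_k dᵏ` with `c_0 = 1`, `c_1 = 1 - y`, `c_{k+2} = (1-y) c_{k+1} + y c_k`,
a recurrence solved by `(1+y) c_k = 1 - (-y)^{k+1}`. -/

lemma omega_eq_linearCombination (f : NCPoly) :
    omega f =
      Finsupp.linearCombination NCR (fun w : FreeMonoid Bool => omegaWord w.toList) f.coeff :=
  rfl

lemma omega_sub (f g : NCPoly) : omega (f - g) = omega f - omega g := by
  simp only [omega_eq_linearCombination, MonoidAlgebra.coeff_sub, map_sub]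

lemma omega_add (f g : NCPoly) : omega (f + g) = omega f + omega g := by
  simp only [omega_eq_linearCombination, MonoidAlgebra.coeff_add, map_add]

lemma omega_single (w : FreeMonoid Bool) (c : NCR) :
    omega (MonoidAlgebra.single w c) = c • omegaWord w.toList := by
  simp [omega_eq_linearCombination]

lemma omega_zero : omega 0 = 0 := by simp [omega_eq_linearCombination]

lemma omega_one : omega 1 = 1 :=
  (omega_single 1 1).trans (one_smul _ _)

lemma omega_Aa : omega Aa = Aa + (X : NCR) • Bb :=
  (omega_single _ 1).trans ((one_smul _ _).trans (mul_one _))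

lemma omega_Bb : omega Bb = Bb + (X : NCR) • Aa :=
  (omega_single _ 1).trans ((one_smul _ _).trans (mul_one _))

lemma omega_of_mul_eq_mul_omega_of_mul {u v : FreeMonoid Bool} {p : NCPoly}
    (h : ∀ w : FreeMonoid Bool, omegaWord (u * w).toList = p * omegaWord (v * w).toList)
    (f : NCPoly) :
    omega (MonoidAlgebra.of NCR _ u * f) = p * omega (MonoidAlgebra.of NCR _ v * f) := by
  induction f using MonoidAlgebra.induction_linear with
  | zero => simp only [mul_zero, omega_zero]
  | add f g hf hg => simp only [mul_add, omega_add, hf, hg]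
  | single w c =>
    simp only [MonoidAlgebra.of_apply, MonoidAlgebra.single_mul_single, one_mul, omega_single,
      h, mul_smul_comm]

lemma omega_Bb_mul (f : NCPoly) : omega (Bb * f) = (Bb + (X : NCR) • Aa) * omega f := by
  have h := omega_of_mul_eq_mul_omega_of_mul (u := FreeMonoid.of true) (v := 1)
    (p := Bb + (X : NCR) • Aa) (fun _ => rfl) f
  rwa [map_one, one_mul] at h

lemma omega_Aa_mul_Aa_mul (f : NCPoly) :
    omega (Aa * (Aa * f)) = (Aa + (X : NCR) • Bb) * omega (Aa * f) := by
  have h := omega_of_mul_eq_mul_omega_of_mul (u := FreeMonoid.of false * FreeMonoid.of false)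
    (v := FreeMonoid.of false) (p := Aa + (X : NCR) • Bb) (fun _ => rfl) f
  rwa [map_mul, mul_assoc] at h

lemma omega_Aa_mul_Bb_mul (f : NCPoly) :
    omega (Aa * (Bb * f)) =
      ((1 + X : NCR) • (Aa * Bb) + (X + X ^ 2 : NCR) • (Bb * Aa)) * omega f := by
  have h := omega_of_mul_eq_mul_omega_of_mul (u := FreeMonoid.of false * FreeMonoid.of true)
    (v := 1) (p := (1 + X : NCR) • (Aa * Bb) + (X + X ^ 2 : NCR) • (Bb * Aa)) (fun _ => rfl) f
  rwa [map_mul, mul_assoc, map_one, one_mul] at h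

lemma omega_Aa_mul_sub_mul (f : NCPoly) :
    omega (Aa * ((Aa - Bb) * f)) =
      (Aa + (X : NCR) • Bb) * omega ((Aa - Bb) * f) +
        (X : NCR) • ((Aa - Bb) * ((Aa - Bb) * omega f)) := by
  rw [sub_mul, mul_sub, omega_sub, omega_sub, omega_Aa_mul_Aa_mul, omega_Aa_mul_Bb_mul,
    omega_Bb_mul]
  simp only [mul_add, add_mul, sub_mul, mul_sub, smul_mul_assoc, mul_smul_comm, smul_sub,
    smul_add, smul_smul, mul_assoc]
  module

lemma omega_sub_mul_sub_mul (f : NCPoly) :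
    omega ((Aa - Bb) * ((Aa - Bb) * f)) =
      (1 - X : NCR) • ((Aa - Bb) * omega ((Aa - Bb) * f)) +
        (X : NCR) • ((Aa - Bb) * ((Aa - Bb) * omega f)) := by
  rw [sub_mul Aa Bb ((Aa - Bb) * f), omega_sub, omega_Aa_mul_sub_mul, omega_Bb_mul]
  simp only [add_mul, sub_mul, smul_mul_assoc, smul_sub, sub_smul]
  module

lemma omega_Aa_sub_Bb : omega (Aa - Bb) = (1 - X : NCR) • (Aa - Bb) := by
  rw [omega_sub, omega_Aa, omega_Bb]
  module

/-- `(1+y)·ω((a-b)^k) = (1-(-y)^{k+1})·(a-b)^k` in `ℤ[y]⟨a,b⟩`. -/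
theorem omega_pow_sub (k : ℕ) :
    (1 + X : Polynomial ℤ) • omega ((Aa - Bb) ^ k) =
      ((1 : Polynomial ℤ) - (-X) ^ (k + 1)) • (Aa - Bb) ^ k := by
  induction k using Nat.twoStepInduction with
  | zero =>
    rw [pow_zero, omega_one]
    congr 1
    ring
  | one =>
    rw [pow_one, omega_Aa_sub_Bb, smul_smul]
    congr 1
    ring
  | more k ih₀ ih₁ =>
    rw [pow_succ' _ (k + 1), pow_succ', omega_sub_mul_sub_mul, ← pow_succ']
    calc _ = (1 - X : NCR) • ((Aa - Bb) * ((1 + X : NCR) • omega ((Aa - Bb) ^ (k + 1)))) +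
          (X : NCR) • ((Aa - Bb) * ((Aa - Bb) * ((1 + X : NCR) • omega ((Aa - Bb) ^ k)))) := by
          simp only [mul_smul_comm]
          module
      _ = _ := by
          rw [ih₀, ih₁]
          simp only [mul_smul_comm, smul_smul, ← pow_succ', ← add_smul]
          congr 1
          ring
end

section
/- On ℤ[y]⟨a,b⟩, the transformations ι and ω satisfy ι∘ω = (1+y)·(ω∘ι); that is, for every f ∈ ℤ[y]⟨a,b⟩ one has ι(ω(f)) = (1+y)·ω(ι(f)). -/
open Polynomial

/-!
Both sides are linear in `f`, so it suffices to compare them on a monomial `w`, and `ι` only sees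
the first block of `ω(w)`. If `w` starts with `a` not followed by `b`, or with `b`, that block is
`a + yb` resp. `b + ya`, and deleting first letters leaves `(1 + y)·ω(rest)`. If `w = ab·rest`,
deleting the first letters of `(1+y)ab + (y+y²)ba` leaves `(1+y)b + (y+y²)a = (1+y)(b + ya)`,
which is `(1+y)` times the first block of `ω(b·rest)`.
-/

noncomputable section

open MonoidAlgebra

section Tail

variable {R α : Type*} [CommSemiring R]

def tailWord (w : FreeMonoid α) : MonoidAlgebra R (FreeMonoid α) :=
  match FreeMonoid.toList w with
  | [] => 0
  | _ :: rest => of R (FreeMonoid α) (FreeMonoid.ofList rest)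

@[simp]
lemma tailWord_one : tailWord (1 : FreeMonoid α) = (0 : MonoidAlgebra R (FreeMonoid α)) := rfl

@[simp]
lemma tailWord_of_mul (x : α) (w : FreeMonoid α) :
    tailWord (FreeMonoid.of x * w) = of R (FreeMonoid α) w := rfl

variable (R α) in
def tailₗ : MonoidAlgebra R (FreeMonoid α) →ₗ[R] MonoidAlgebra R (FreeMonoid α) :=
  Finsupp.lsum R (fun w => LinearMap.toSpanSingleton R _ (tailWord w)) ∘ₗ
    (coeffLinearEquiv R).toLinearMap

@[simp]
lemma tailₗ_single (w : FreeMonoid α) (c : R) : tailₗ R α (single w c) = c • tailWord w := by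
  simp [tailₗ]

@[simp]
lemma tailₗ_one : tailₗ R α 1 = 0 := by
  simp [MonoidAlgebra.one_def]

lemma tailₗ_of_mul (x : α) (g : MonoidAlgebra R (FreeMonoid α)) :
    tailₗ R α (of R _ (FreeMonoid.of x) * g) = g := by
  induction g using MonoidAlgebra.induction_linear with
  | zero => simp
  | add f g hf hg => rw [mul_add, map_add, hf, hg]
  | single w c => simp

lemma tailₗ_of_add_smul_of_mul (x y : α) (r : R) (g : MonoidAlgebra R (FreeMonoid α)) :
    tailₗ R α ((of R _ (FreeMonoid.of x) + r • of R _ (FreeMonoid.of y)) * g) = (1 + r) • g := by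
  rw [add_mul, smul_mul_assoc, map_add, map_smul, tailₗ_of_mul, tailₗ_of_mul, add_smul, one_smul]

end Tail

lemma iota_eq_tailₗ (f : NCPoly) : iota f = tailₗ NCR Bool f := by
  rw [iota, tailₗ]
  refine Finsupp.sum_congr fun w _ => ?_
  cases w <;> simp

def omegaₗ : NCPoly →ₗ[NCR] NCPoly :=
  Finsupp.lsum NCR (fun w => LinearMap.toSpanSingleton NCR NCPoly (omegaWord w.toList)) ∘ₗ
    (coeffLinearEquiv NCR).toLinearMap

lemma coe_omegaₗ : ⇑omegaₗ = omega := rfl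

@[simp]
lemma omegaₗ_single (w : FreeMonoid Bool) (c : NCR) :
    omegaₗ (single w c) = c • omegaWord w.toList := by
  simp [omegaₗ]

lemma tailₗ_omegaWord_cons (x : Bool) (l : List Bool) :
    tailₗ NCR Bool (omegaWord (x :: l)) = (1 + X : NCR) • omegaWord l := by
  have tailₗ_Aa_mul (g : NCPoly) : tailₗ NCR Bool (Aa * g) = g := tailₗ_of_mul false g
  have tailₗ_Bb_mul (g : NCPoly) : tailₗ NCR Bool (Bb * g) = g := tailₗ_of_mul true g
  match x, l with
  | true, l => exact tailₗ_of_add_smul_of_mul true false X _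
  | false, [] => exact tailₗ_of_add_smul_of_mul false true X _
  | false, false :: rest => exact tailₗ_of_add_smul_of_mul false true X _
  | false, true :: rest =>
    calc tailₗ NCR Bool
          (((1 + X : NCR) • (Aa * Bb) + (X + X ^ 2 : NCR) • (Bb * Aa)) * omegaWord rest)
        = (1 + X : NCR) • (Bb * omegaWord rest) + (X + X ^ 2 : NCR) • (Aa * omegaWord rest) := by
          simp only [add_mul, smul_mul_assoc, mul_assoc, map_add, map_smul, tailₗ_Aa_mul,
            tailₗ_Bb_mul]
      _ = (1 + X : NCR) • ((Bb + (X : NCR) • Aa) * omegaWord rest) := by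
          rw [add_mul, smul_add, smul_mul_assoc, smul_smul, add_mul, one_mul, ← sq]

end

/-- On `ℤ[y]⟨a,b⟩` one has `ι ∘ ω = (1+y)·(ω ∘ ι)`. -/
theorem iota_omega_eq (f : NCPoly) :
    iota (omega f) = (1 + X : Polynomial ℤ) • omega (iota f) := by
  suffices h : tailₗ NCR Bool ∘ₗ omegaₗ = (1 + X : NCR) • (omegaₗ ∘ₗ tailₗ NCR Bool) by
    simpa [iota_eq_tailₗ, coe_omegaₗ] using LinearMap.congr_fun h f
  ext w : 2
  cases w with
  | one => simp [omegaWord]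
  | of_mul x w => simp [tailₗ_omegaWord_cons]
end
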